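/- If D is a cut-free and lazy derivation of LEM, then all judgments occurring in D are lazy, and D contains no instances of the rules ∀L, d, w, c, nor of the rule p with a non-empty context. -/

import Mathlib

namespace LEMPaper

/-! ## Types of `LEM` -/

/-- Types of `LEM`: raw syntax `σ ::= α | σ ⊸ τ | ∀α.σ | ♯σ`
(type variables in de Bruijn representation).  The grammar of the paper
(exponential types `σ ::= A | ♯σ`, linear types `A ::= α | σ ⊸ A | ∀α.A`) is
carved out by the predicates `IsLinear` and `IsExp` below. -/
inductive LTy : Type
  | var : ℕ → LTy
  | arr : LTy → LTy → LTy
  | all : LTy → LTy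
  | bang : LTy → LTy
  deriving DecidableEq

namespace LTy

def liftRen (ρ : ℕ → ℕ) : ℕ → ℕ
  | 0 => 0
  | n + 1 => ρ n + 1

def rename (ρ : ℕ → ℕ) : LTy → LTy
  | var n => var (ρ n)
  | arr A B => arr (A.rename ρ) (B.rename ρ)
  | all A => all (A.rename (liftRen ρ))
  | bang A => bang (A.rename ρ)

/-- Shift all free type variables up by one. -/
def shift (A : LTy) : LTy := A.rename Nat.succ

def liftSub (s : ℕ → LTy) : ℕ → LTy
  | 0 => var 0
  | n + 1 => (s n).shift

def substAll (s : ℕ → LTy) : LTy → LTy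
  | var n => s n
  | arr A B => arr (A.substAll s) (B.substAll s)
  | all A => all (A.substAll (liftSub s))
  | bang A => bang (A.substAll s)

/-- `A.instTop B` instantiates the outermost bound type variable of `A` with `B`. -/
def instTop (A B : LTy) : LTy :=
  A.substAll (fun n => match n with | 0 => B | m + 1 => var m)

/-- All free type variables are `< d`. -/
def ClosedAt : LTy → ℕ → Prop
  | var n, d => n < d
  | arr A B, d => A.ClosedAt d ∧ B.ClosedAt d
  | all A, d => A.ClosedAt (d + 1)
  | bang A, d => A.ClosedAt d

/-- `noForall A true` : `A` has no positive occurrence of `∀`;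
`noForall A false` : `A` has no negative occurrence of `∀`. -/
def noForall : LTy → Bool → Prop
  | var _, _ => True
  | arr A B, b => A.noForall (!b) ∧ B.noForall b
  | all A, b => b = false ∧ A.noForall b
  | bang A, b => A.noForall b

/-- A type is *lazy* if it contains no negative occurrences of `∀`. -/
def Lazy (A : LTy) : Prop := A.noForall false

/-- The size (number of nodes of the syntax tree) of a type. -/
def size : LTy → ℕ
  | var _ => 1
  | arr A B => A.size + B.size + 1
  | all A => A.size + 1
  | bang A => A.size + 1

/-- The number of occurrences of `∀` and `♯` in a type. -/
def qmCount : LTy → ℕ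
  | var _ => 0
  | arr A B => A.qmCount + B.qmCount
  | all A => A.qmCount + 1
  | bang A => A.qmCount + 1

end LTy

mutual
  /-- Linear types: `A ::= α | σ ⊸ A | ∀α.A`. -/
  inductive LTy.IsLinear : LTy → Prop
    | var (n : ℕ) : LTy.IsLinear (.var n)
    | arr {σ A : LTy} : LTy.IsExp σ → LTy.IsLinear A → LTy.IsLinear (.arr σ A)
    | all {A : LTy} : LTy.IsLinear A → LTy.IsLinear (.all A)
  /-- Exponential types: `σ ::= A | ♯σ`, where in `♯σ` the type `σ` must be
  closed and without negative occurrences of `∀`. -/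
  inductive LTy.IsExp : LTy → Prop
    | lin {A : LTy} : LTy.IsLinear A → LTy.IsExp A
    | bang {σ : LTy} : LTy.IsExp σ → σ.ClosedAt 0 → σ.noForall false →
        LTy.IsExp (.bang σ)
end

/-- Well-formedness of the modal type `♯σ`: `σ` is an exponential type,
closed and without negative occurrences of `∀`. -/
def LTy.BangOk (σ : LTy) : Prop := σ.IsExp ∧ σ.ClosedAt 0 ∧ σ.noForall false

/-! ## Terms of `LEM` -/

/-- Terms of `LEM` (Definition 4.2), de Bruijn representation:
`M ::= x | λx.M | M N | discard_σ M in N | copy^V_σ M as x,y in N`.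
In `copy σ V S B`, `B` is the body (with two bound variables: `1` for the first
copy-variable and `0` for the second one), `S` the copied term, `V` the value
annotation. -/
inductive LTm : Type
  | var : ℕ → LTm
  | app : LTm → LTm → LTm
  | lam : LTm → LTm
  | discard : LTy → LTm → LTm → LTm
  | copy : LTy → LTm → LTm → LTm → LTm
  deriving DecidableEq

namespace LTm

def liftRen (ρ : ℕ → ℕ) : ℕ → ℕ
  | 0 => 0
  | n + 1 => ρ n + 1

/-- Renaming of free variables (the closed value annotation of `copy` is untouched). -/
def rename (ρ : ℕ → ℕ) : LTm → LTm
  | var n => var (ρ n)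
  | app M N => app (M.rename ρ) (N.rename ρ)
  | lam M => lam (M.rename (liftRen ρ))
  | discard σ M N => discard σ (M.rename ρ) (N.rename ρ)
  | copy σ V S B => copy σ V (S.rename ρ) (B.rename (liftRen (liftRen ρ)))

/-- Shift all free variables up by one. -/
def shift (M : LTm) : LTm := M.rename Nat.succ

def liftSub (s : ℕ → LTm) : ℕ → LTm
  | 0 => var 0
  | n + 1 => (s n).shift

/-- Simultaneous capture-avoiding substitution. -/
def substAll (s : ℕ → LTm) : LTm → LTm
  | var n => s n
  | app M N => app (M.substAll s) (N.substAll s)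
  | lam M => lam (M.substAll (liftSub s))
  | discard σ M N => discard σ (M.substAll s) (N.substAll s)
  | copy σ V S B => copy σ V (S.substAll s) (B.substAll (liftSub (liftSub s)))

/-- Capture-avoiding substitution `M[N/n]`; variables above `n` are decremented. -/
def subst (M : LTm) (n : ℕ) (N : LTm) : LTm :=
  M.substAll (fun m => if m < n then var m else if m = n then N else var (m - 1))

/-- Substitute the term `V` for both bound variables of a `copy`-body. -/
def subst2 (B V : LTm) : LTm :=
  B.substAll (fun m => match m with | 0 => V | 1 => V | n + 2 => var n)

/-- Number of (free) occurrences of the variable `n` in a term. -/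
def countFree : LTm → ℕ → ℕ
  | var m, n => if m = n then 1 else 0
  | app M N, n => M.countFree n + N.countFree n
  | lam M, n => M.countFree (n + 1)
  | discard _ M N, n => M.countFree n + N.countFree n
  | copy _ _ S B, n => S.countFree n + B.countFree (n + 2)

/-- A term is closed when it has no free variables. -/
def ClosedTm (M : LTm) : Prop := ∀ n, M.countFree n = 0

/-- Linearity of `LEM` terms (Definition 4.2): every free variable occurs exactly
once, and all bound variables (of `λ` and of `copy`) occur in their scope. -/
def LinearTm : LTm → Prop
  | var _ => True
  | app M N => M.LinearTm ∧ N.LinearTm ∧ ∀ n, M.countFree n = 0 ∨ N.countFree n = 0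
  | lam M => M.LinearTm ∧ M.countFree 0 = 1
  | discard _ M N => M.LinearTm ∧ N.LinearTm ∧
      ∀ n, M.countFree n = 0 ∨ N.countFree n = 0
  | copy _ _ S B => S.LinearTm ∧ B.LinearTm ∧ B.countFree 0 = 1 ∧ B.countFree 1 = 1 ∧
      ∀ n, S.countFree n = 0 ∨ B.countFree (n + 2) = 0

/-- Purity: the term is an ordinary λ-term (no `discard`/`copy` constructs). -/
def IsPure : LTm → Prop
  | var _ => True
  | app M N => M.IsPure ∧ N.IsPure
  | lam M => M.IsPure
  | discard _ _ _ => False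
  | copy _ _ _ _ => False

/-- The size of a term (Definition 4.2); the value annotation of `copy` counts. -/
def size : LTm → ℕ
  | var _ => 1
  | app M N => M.size + N.size + 1
  | lam M => M.size + 1
  | discard _ M N => M.size + N.size + 1
  | copy _ V S B => S.size + B.size + V.size + 1

end LTm

/-- β-reduction on (pure) terms, used to define β-normality of values. -/
inductive PureStep : LTm → LTm → Prop
  | beta (M N : LTm) : PureStep (.app (.lam M) N) (M.subst 0 N)
  | appL {M M'} (N : LTm) : PureStep M M' → PureStep (.app M N) (.app M' N)
  | appR (M : LTm) {N N'} : PureStep N N' → PureStep (.app M N) (.app M N')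
  | lam {M M'} : PureStep M M' → PureStep (.lam M) (.lam M')

/-- A value is a closed linear λ-term (pure, i.e. `discard`/`copy`-free) in
β-normal form. -/
def IsValue (V : LTm) : Prop :=
  V.IsPure ∧ V.LinearTm ∧ V.ClosedTm ∧ ∀ W, ¬ PureStep V W

/-- The one-step reduction relation `→` on terms of `LEM` (Figures 2 and 3):
β-reduction, discarding and copying of values, and the commuting conversions,
all closed under arbitrary contexts. -/
inductive Step : LTm → LTm → Prop
  -- Figure 2: reduction rules
  | beta (M N : LTm) : Step (.app (.lam M) N) (M.subst 0 N)
  | discardV {V : LTm} (σ : LTy) (M : LTm) :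
      IsValue V → Step (.discard σ V M) M
  | copyV {V : LTm} (σ : LTy) (U B : LTm) :
      IsValue V → Step (.copy σ U V B) (B.subst2 V)
  -- Figure 3: commuting conversions
  | discardApp (σ : LTy) (M N P : LTm) :
      Step (.app (.discard σ M N) P) (.discard σ M (.app N P))
  | discardDiscard (σ τ : LTy) (M N P : LTm) :
      Step (.discard σ (.discard τ M N) P) (.discard τ M (.discard σ N P))
  | copyDiscard (σ τ : LTy) (V M N B : LTm) :
      Step (.copy σ V (.discard τ M N) B) (.discard τ M (.copy σ V N B))
  | copyApp (σ : LTy) (V M B P : LTm) :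
      Step (.app (.copy σ V M B) P) (.copy σ V M (.app B (P.rename (· + 2))))
  | discardCopy (σ τ : LTy) (V M N P : LTm) :
      Step (.discard σ (.copy τ V M N) P)
           (.copy τ V M (.discard σ N (P.rename (· + 2))))
  | copyCopy (σ τ : LTy) (U V M N P : LTm) :
      Step (.copy σ U (.copy τ V M N) P)
           (.copy τ V M (.copy σ U N (P.rename (fun n => if n < 2 then n else n + 2))))
  -- contextual closure
  | appL {M M'} (N : LTm) : Step M M' → Step (.app M N) (.app M' N)
  | appR (M : LTm) {N N'} : Step N N' → Step (.app M N) (.app M N')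
  | lamC {M M'} : Step M M' → Step (.lam M) (.lam M')
  | discardL (σ : LTy) {M M'} (N : LTm) : Step M M' → Step (.discard σ M N) (.discard σ M' N)
  | discardR (σ : LTy) (M : LTm) {N N'} : Step N N' → Step (.discard σ M N) (.discard σ M N')
  | copyS (σ : LTy) (V : LTm) {S S'} (B : LTm) : Step S S' → Step (.copy σ V S B) (.copy σ V S' B)
  | copyB (σ : LTy) (V S : LTm) {B B'} : Step B B' → Step (.copy σ V S B) (.copy σ V S B')

/-! ## The sequent calculus `LEM` -/

/-- The renaming swapping the de Bruijn variables `k` and `k+1`. -/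
def swapVar (k : ℕ) (n : ℕ) : ℕ :=
  if n = k then k + 1 else if n = k + 1 then k else n

/-- Term produced by the `cut` rule: substitute `N` (whose variables point into the
first `g` positions) for the variable `0` of `M`, re-addressing the remaining
variables of `M`. -/
def cutTm (g : ℕ) (N M : LTm) : LTm :=
  M.substAll (fun n => match n with
    | 0 => N
    | m + 1 => .var (g + m))

/-- Term produced by the `⊸L` rule: `M[yN/x]`, with the new variable `y` at
position `0`. -/
def arrLTm (g : ℕ) (N M : LTm) : LTm :=
  M.substAll (fun n => match n with
    | 0 => .app (.var 0) N.shift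
    | m + 1 => .var (g + 1 + m))

/-- The type-assignment system `LEM` (Figure 5), as a sequent calculus with
contexts rendered as lists; the implicit exchange of multiset contexts is
rendered by the structural rule `exch` (which is invisible in the paper and
contributes no size).  The rules `prom` (p), `der` (d), `weak` (w) and
`contr` (c) handle the modality `♯`. -/
inductive Der : List LTy → LTm → LTy → Type
  | ax {A : LTy} : A.IsLinear → Der [A] (.var 0) A
  | exch (Γ₁ : List LTy) {σ τ : LTy} {Γ₂ : List LTy} {M : LTm} {C : LTy} :
      Der (Γ₁ ++ σ :: τ :: Γ₂) M C →
      Der (Γ₁ ++ τ :: σ :: Γ₂) (M.rename (swapVar Γ₁.length)) C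
  | cut (Γ : List LTy) {Δ : List LTy} {N M : LTm} {σ τ : LTy} :
      Der Γ N σ → Der (σ :: Δ) M τ →
      Der (Γ ++ Δ) (cutTm Γ.length N M) τ
  | arrR {Γ : List LTy} {M : LTm} {σ B : LTy} :
      B.IsLinear → Der (σ :: Γ) M B → Der Γ (.lam M) (σ.arr B)
  | arrL (Γ : List LTy) {Δ : List LTy} {N M : LTm} {σ B τ : LTy} :
      B.IsLinear → Der Γ N σ → Der (B :: Δ) M τ →
      Der ((σ.arr B) :: (Γ ++ Δ)) (arrLTm Γ.length N M) τ
  | allR {Γ : List LTy} {M : LTm} {A : LTy} :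
      A.IsLinear → Der (Γ.map LTy.shift) M A → Der Γ M (.all A)
  | allL {Γ : List LTy} {M : LTm} {A τ : LTy} (B : LTy) :
      B.IsLinear → Der ((A.instTop B) :: Γ) M τ → Der ((.all A) :: Γ) M τ
  | prom {Γ : List LTy} {M : LTm} {σ : LTy} :
      σ.BangOk → (∀ τ ∈ Γ, ∃ ρ, τ = LTy.bang ρ) → Der Γ M σ → Der Γ M (.bang σ)
  | der {Γ : List LTy} {M : LTm} {σ τ : LTy} :
      σ.BangOk → Der (σ :: Γ) M τ → Der ((.bang σ) :: Γ) M τ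
  | weak {Γ : List LTy} {M : LTm} {σ τ : LTy} :
      σ.BangOk → Der Γ M τ →
      Der ((.bang σ) :: Γ) (.discard σ (.var 0) M.shift) τ
  | contr {Γ : List LTy} {M V : LTm} {σ τ : LTy} :
      σ.BangOk → IsValue V →
      Der ((.bang σ) :: (.bang σ) :: Γ) M τ → Der [] V σ →
      Der ((.bang σ) :: Γ)
        (.copy σ V (.var 0) (M.rename (fun n => if n < 2 then n else n + 1))) τ

/-- A judgment `x₁:σ₁,…,xₙ:σₙ ⊢ M : τ` is *lazy* when `τ` has no negative
occurrence of `∀` and the `σᵢ` have no positive occurrence of `∀`. -/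
def LazyJudg (Γ : List LTy) (τ : LTy) : Prop :=
  τ.noForall false ∧ ∀ σ ∈ Γ, σ.noForall true

namespace Der

/-- A derivation is cut-free when it contains no instance of `cut`. -/
def cutFree : ∀ {Γ M τ}, Der Γ M τ → Prop
  | _, _, _, .ax _ => True
  | _, _, _, .exch _ D => D.cutFree
  | _, _, _, .cut _ _ _ => False
  | _, _, _, .arrR _ D => D.cutFree
  | _, _, _, .arrL _ _ D₁ D₂ => D₁.cutFree ∧ D₂.cutFree
  | _, _, _, .allR _ D => D.cutFree
  | _, _, _, .allL _ _ D => D.cutFree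
  | _, _, _, .prom _ _ D => D.cutFree
  | _, _, _, .der _ D => D.cutFree
  | _, _, _, .weak _ D => D.cutFree
  | _, _, _, .contr _ _ D₁ D₂ => D₁.cutFree ∧ D₂.cutFree

/-- The size of a derivation (Definition 6.2): `1` for an axiom, `+1` for every
rule instance except contraction which counts `+3`; the administrative rule
`exch` (implicit in the multiset contexts of the paper) does not count. -/
def size : ∀ {Γ M τ}, Der Γ M τ → ℕ
  | _, _, _, .ax _ => 1
  | _, _, _, .exch _ D => D.size
  | _, _, _, .cut _ D₁ D₂ => D₁.size + D₂.size + 1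
  | _, _, _, .arrR _ D => D.size + 1
  | _, _, _, .arrL _ _ D₁ D₂ => D₁.size + D₂.size + 1
  | _, _, _, .allR _ D => D.size + 1
  | _, _, _, .allL _ _ D => D.size + 1
  | _, _, _, .prom _ _ D => D.size + 1
  | _, _, _, .der _ D => D.size + 1
  | _, _, _, .weak _ D => D.size + 1
  | _, _, _, .contr _ _ D₁ D₂ => D₁.size + D₂.size + 3

end Der

end LEMPaper

namespace LEMPaper

namespace Der

/-- All the judgments occurring in a derivation are lazy. -/
def allLazy : ∀ {Γ M τ}, Der Γ M τ → Prop
  | _, _, _, .ax (A := A) _ => LazyJudg [A] A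
  | _, _, _, .exch (σ := σ) (τ := τ') (Γ₂ := Γ₂) (C := C) Γ₁ D =>
      LazyJudg (Γ₁ ++ τ' :: σ :: Γ₂) C ∧ D.allLazy
  | _, _, _, .cut (Δ := Δ) (τ := τ) Γ D₁ D₂ =>
      LazyJudg (Γ ++ Δ) τ ∧ D₁.allLazy ∧ D₂.allLazy
  | _, _, _, .arrR (Γ := Γ) (σ := σ) (B := B) _ D =>
      LazyJudg Γ (σ.arr B) ∧ D.allLazy
  | _, _, _, .arrL (Δ := Δ) (σ := σ) (B := B) (τ := τ) Γ _ D₁ D₂ =>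
      LazyJudg ((σ.arr B) :: (Γ ++ Δ)) τ ∧ D₁.allLazy ∧ D₂.allLazy
  | _, _, _, .allR (Γ := Γ) (A := A) _ D =>
      LazyJudg Γ (.all A) ∧ D.allLazy
  | _, _, _, .allL (Γ := Γ) (A := A) (τ := τ) _ _ D =>
      LazyJudg ((.all A) :: Γ) τ ∧ D.allLazy
  | _, _, _, .prom (Γ := Γ) (σ := σ) _ _ D =>
      LazyJudg Γ (.bang σ) ∧ D.allLazy
  | _, _, _, .der (Γ := Γ) (σ := σ) (τ := τ) _ D =>
      LazyJudg ((.bang σ) :: Γ) τ ∧ D.allLazy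
  | _, _, _, .weak (Γ := Γ) (σ := σ) (τ := τ) _ D =>
      LazyJudg ((.bang σ) :: Γ) τ ∧ D.allLazy
  | _, _, _, .contr (Γ := Γ) (σ := σ) (τ := τ) _ _ D₁ D₂ =>
      LazyJudg ((.bang σ) :: Γ) τ ∧ D₁.allLazy ∧ D₂.allLazy

/-- The derivation contains no instance of `∀L`, `d`, `w`, `c`, nor of `p` with a
non-empty context. -/
def goodRules : ∀ {Γ M τ}, Der Γ M τ → Prop
  | _, _, _, .ax _ => True
  | _, _, _, .exch _ D => D.goodRules
  | _, _, _, .cut _ D₁ D₂ => D₁.goodRules ∧ D₂.goodRules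
  | _, _, _, .arrR _ D => D.goodRules
  | _, _, _, .arrL _ _ D₁ D₂ => D₁.goodRules ∧ D₂.goodRules
  | _, _, _, .allR _ D => D.goodRules
  | _, _, _, .allL _ _ _ => False
  | _, _, _, .prom (Γ := Γ) _ _ D => Γ = [] ∧ D.goodRules
  | _, _, _, .der _ _ => False
  | _, _, _, .weak _ _ => False
  | _, _, _, .contr _ _ _ _ => False

end Der

/-! A closed type always contains a positive `∀`, so a type `♯σ` with `σ` closed never occurs
in a lazy context. Every `♯ρ` in the context of a derivation has `ρ` closed, since it was
introduced by `d`, `w` or `c` (and `∀R` only shifts it). Hence in a lazy derivation no `♯`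
occurs on the left, which rules out `d`, `w`, `c` and `p` with non-empty context; `∀L` is
ruled out because its `∀` is positive on the left. For every other rule except cut, a lazy
conclusion forces lazy premises by polarity. -/

namespace LTy

theorem noForall_rename (A : LTy) (f : ℕ → ℕ) (b : Bool) :
    (A.rename f).noForall b ↔ A.noForall b := by
  induction A generalizing f b <;> simp [rename, noForall, *]

/-- The variable at the end of the positive spine of a closed type must be bound by a
`∀` on that spine, which occurs positively. -/
theorem ClosedAt.not_noForall_true {A : LTy} (h : A.ClosedAt 0) : ¬ A.noForall true := by
  induction A with
  | var n => exact absurd h (Nat.not_lt_zero n)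
  | arr _ _ _ ihB => exact fun hA => ihB h.2 hA.2
  | all _ _ => exact fun hA => Bool.noConfusion hA.1
  | bang _ ih => exact ih h

end LTy

namespace Der

theorem not_noForall_true_of_bang_mem {Γ : List LTy} {M : LTm} {τ : LTy} (D : Der Γ M τ)
    {ρ : LTy} (hρ : LTy.bang ρ ∈ Γ) : ¬ ρ.noForall true := by
  induction D generalizing ρ with
  | ax hA =>
    rw [List.mem_singleton] at hρ
    subst hρ
    nomatch hA
  | exch _ _ ih => exact ih (((List.Perm.swap _ _ _).append_left _).subset hρ)
  | cut _ _ _ ih₁ ih₂ =>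
    rcases List.mem_append.1 hρ with hρ | hρ
    · exact ih₁ hρ
    · exact ih₂ (List.mem_cons_of_mem _ hρ)
  | arrR _ _ ih => exact ih (List.mem_cons_of_mem _ hρ)
  | arrL _ _ _ _ ih₁ ih₂ =>
    simp only [List.mem_cons, List.mem_append, reduceCtorEq, false_or] at hρ
    rcases hρ with hρ | hρ
    · exact ih₁ hρ
    · exact ih₂ (List.mem_cons_of_mem _ hρ)
  | allR _ _ ih =>
    rw [← LTy.noForall_rename ρ Nat.succ]
    exact ih (List.mem_map_of_mem (f := LTy.shift) hρ)
  | allL _ _ _ ih =>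
    simp only [List.mem_cons, reduceCtorEq, false_or] at hρ
    exact ih (List.mem_cons_of_mem _ hρ)
  | prom _ _ _ ih => exact ih hρ
  | der hσ _ ih =>
    rcases List.mem_cons.1 hρ with hρ | hρ
    · cases hρ
      exact hσ.2.1.not_noForall_true
    · exact ih (List.mem_cons_of_mem _ hρ)
  | weak hσ _ ih =>
    rcases List.mem_cons.1 hρ with hρ | hρ
    · cases hρ
      exact hσ.2.1.not_noForall_true
    · exact ih hρ
  | contr hσ _ _ _ ih _ =>
    rcases List.mem_cons.1 hρ with hρ | hρ
    · cases hρ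
      exact hσ.2.1.not_noForall_true
    · exact ih (List.mem_cons_of_mem _ (List.mem_cons_of_mem _ hρ))

end Der

theorem LazyJudg.of_subset {Γ Γ' : List LTy} {τ : LTy} (h : LazyJudg Γ τ) (hΓ : Γ' ⊆ Γ) :
    LazyJudg Γ' τ :=
  ⟨h.1, fun σ hσ => h.2 σ (hΓ hσ)⟩

theorem lazyJudg_arr_iff {Γ : List LTy} {σ B : LTy} :
    LazyJudg Γ (σ.arr B) ↔ LazyJudg (σ :: Γ) B := by
  simp only [LazyJudg, LTy.noForall, List.mem_cons, forall_eq_or_imp]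
  tauto

theorem LazyJudg.arrL {Γ Δ : List LTy} {σ B τ : LTy}
    (h : LazyJudg ((σ.arr B) :: (Γ ++ Δ)) τ) : LazyJudg Γ σ ∧ LazyJudg (B :: Δ) τ := by
  simp_all [LazyJudg, LTy.noForall]

theorem LazyJudg.allR {Γ : List LTy} {A : LTy} (h : LazyJudg Γ (.all A)) :
    LazyJudg (Γ.map LTy.shift) A := by
  simp_all [LazyJudg, LTy.noForall, LTy.shift, LTy.noForall_rename]

/-- Lemma 6.1.(5): if `D` is a cut-free and lazy derivation of
`LEM`, then all the judgments occurring in `D` are lazy, and `D` contains no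
instance of the rules `∀L`, `d`, `w`, `c`, nor of the rule `p` with a non-empty
context. -/
theorem cutFree_lazy_derivation_allLazy_goodRules
    {Γ : List LTy} {M : LTm} {τ : LTy} (D : Der Γ M τ)
    (hcf : D.cutFree) (hlazy : LazyJudg Γ τ) :
    D.allLazy ∧ D.goodRules := by
  induction D with
  | ax => exact ⟨hlazy, trivial⟩
  | exch _ _ ih =>
    exact (ih hcf (hlazy.of_subset ((List.Perm.swap _ _ _).append_left _).subset)).imp_left
      (⟨hlazy, ·⟩)
  | cut => exact hcf.elim
  | arrR _ _ ih => exact (ih hcf (lazyJudg_arr_iff.1 hlazy)).imp_left (⟨hlazy, ·⟩)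
  | arrL _ _ _ _ ih₁ ih₂ =>
    obtain ⟨hD₁, hgood₁⟩ := ih₁ hcf.1 hlazy.arrL.1
    obtain ⟨hD₂, hgood₂⟩ := ih₂ hcf.2 hlazy.arrL.2
    exact ⟨⟨hlazy, hD₁, hD₂⟩, hgood₁, hgood₂⟩
  | allR _ _ ih => exact (ih hcf hlazy.allR).imp_left (⟨hlazy, ·⟩)
  | allL => exact Bool.noConfusion (hlazy.2 _ List.mem_cons_self).1
  | prom _ hΓ D ih =>
    obtain ⟨hD, hgood⟩ := ih hcf hlazy
    refine ⟨⟨hlazy, hD⟩, List.eq_nil_iff_forall_not_mem.2 fun γ hγ => ?_, hgood⟩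
    obtain ⟨ρ, rfl⟩ := hΓ γ hγ
    exact D.not_noForall_true_of_bang_mem hγ (hlazy.2 (.bang ρ) hγ)
  | der hσ | weak hσ | contr hσ =>
    exact (hσ.2.1.not_noForall_true (hlazy.2 (.bang _) List.mem_cons_self)).elim

end LEMPaper
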